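/- arXiv:2410.17965 — 6 statements merged into one kernel-verified Lean document; each statement's English description precedes it below -/
import Mathlib

section
/- Let Λ be an artin algebra and T an object of the exact category 𝒫(Λ) of morphisms between finitely generated projective Λ-modules. Then Ext^1_{𝒫}(T, T) = 0 if and only if Ext^1_{𝒫}(T, M) = 0 for every M in Fac T (the class of objects admitting a deflation from an object of add T). -/
/-!
Common setting: `Λ` is an artin algebra (over a commutative artinian ring `R`, added in the
theorem statements).  `PObj Λ` is the exact category `𝒫(Λ) = Mor(proj-Λ)` of morphisms between
finitely generated projective `Λ`-modules, with conflations the degreewise exact sequences.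
-/

open Function

universe u

variable (Λ : Type u) [Ring Λ]

/-- An object of the morphism category `𝒫(Λ) = Mor(proj-Λ)`: a morphism `f : P → Q`
between finitely generated projective `Λ`-modules. -/
structure PObj where
  P : Type u
  Q : Type u
  [addP : AddCommGroup P]
  [modP : Module Λ P]
  [addQ : AddCommGroup Q]
  [modQ : Module Λ Q]
  fgP : Module.Finite Λ P
  projP : Module.Projective Λ P
  fgQ : Module.Finite Λ Q
  projQ : Module.Projective Λ Q
  f : P →ₗ[Λ] Q

attribute [instance] PObj.addP PObj.modP PObj.addQ PObj.modQ

variable {Λ}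

/-- A morphism in `𝒫(Λ)`: a commutative square. -/
structure PHom (X Y : PObj Λ) where
  a : X.P →ₗ[Λ] Y.P
  b : X.Q →ₗ[Λ] Y.Q
  comm : Y.f.comp a = b.comp X.f

namespace PHom

/-- The identity morphism of `𝒫(Λ)`. -/
def id (X : PObj Λ) : PHom X X :=
  ⟨LinearMap.id, LinearMap.id, by simp⟩

/-- Composition of morphisms in `𝒫(Λ)`. -/
def comp {X Y Z : PObj Λ} (g : PHom Y Z) (f : PHom X Y) : PHom X Z where
  a := g.a.comp f.a
  b := g.b.comp f.b
  comm := by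
    ext x
    have h1 := LinearMap.congr_fun g.comm (f.a x)
    have h2 := LinearMap.congr_fun f.comm x
    simp only [LinearMap.comp_apply] at h1 h2 ⊢
    rw [h1, h2]

/-- The zero morphism in `𝒫(Λ)`. -/
def zero (X Y : PObj Λ) : PHom X Y := ⟨0, 0, by simp⟩

end PHom

/-- Conflations of `𝒫(Λ)`: the degreewise short exact sequences. -/
structure IsConflation {X Y Z : PObj Λ} (i : PHom X Y) (p : PHom Y Z) : Prop where
  inj_a : Injective i.a
  inj_b : Injective i.b
  surj_a : Surjective p.a
  surj_b : Surjective p.b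
  exact_a : LinearMap.range i.a = LinearMap.ker p.a
  exact_b : LinearMap.range i.b = LinearMap.ker p.b

/-- Deflations (admissible epimorphisms) in `𝒫(Λ)`. -/
def IsDeflation {Y Z : PObj Λ} (p : PHom Y Z) : Prop :=
  ∃ (X : PObj Λ) (i : PHom X Y), IsConflation i p

/-- Inflations (admissible monomorphisms) in `𝒫(Λ)`. -/
def IsInflation {X Y : PObj Λ} (i : PHom X Y) : Prop :=
  ∃ (Z : PObj Λ) (p : PHom Y Z), IsConflation i p

/-- `Ext¹_𝒫(T, X) = 0`: every conflation `X ↣ E ↠ T` splits. -/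
def Ext1Vanishes (T X : PObj Λ) : Prop :=
  ∀ (E : PObj Λ) (i : PHom X E) (p : PHom E T),
    IsConflation i p → ∃ s : PHom T E, p.comp s = PHom.id T

/-- Projective objects of the exact category `𝒫(Λ)`. -/
def IsProjObj (X : PObj Λ) : Prop :=
  ∀ (Y Z : PObj Λ) (p : PHom Y Z), IsDeflation p →
    ∀ g : PHom X Z, ∃ h : PHom X Y, p.comp h = g

/-- Injective objects of the exact category `𝒫(Λ)`. -/
def IsInjObj (X : PObj Λ) : Prop :=
  ∀ (Y Z : PObj Λ) (i : PHom Y Z), IsInflation i →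
    ∀ g : PHom Y X, ∃ h : PHom Z X, h.comp i = g

variable (Λ) in
/-- The zero object of `𝒫(Λ)`. -/
def zeroPObj : PObj Λ where
  P := PUnit
  Q := PUnit
  fgP := inferInstance
  projP := inferInstance
  fgQ := inferInstance
  projQ := inferInstance
  f := 0

/-- Direct sum (biproduct) in `𝒫(Λ)`. -/
def PObj.prod (X Y : PObj Λ) : PObj Λ where
  P := X.P × Y.P
  Q := X.Q × Y.Q
  fgP := by haveI := X.fgP; haveI := Y.fgP; infer_instance
  projP := by haveI := X.projP; haveI := Y.projP; infer_instance
  fgQ := by haveI := X.fgQ; haveI := Y.fgQ; infer_instance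
  projQ := by haveI := X.projQ; haveI := Y.projQ; infer_instance
  f := X.f.prodMap Y.f

/-- `n`-fold direct sum of an object of `𝒫(Λ)` with itself. -/
def PObj.npow (X : PObj Λ) : ℕ → PObj Λ
  | 0 => zeroPObj Λ
  | n + 1 => (X.npow n).prod X

/-- `X` is a direct summand of `T` in `𝒫(Λ)`. -/
def IsSummandP (X T : PObj Λ) : Prop :=
  ∃ (s : PHom X T) (r : PHom T X), r.comp s = PHom.id X

/-- `X ∈ add T`: `X` is a direct summand of a finite direct sum of copies of `T`. -/
def InAdd (T X : PObj Λ) : Prop := ∃ n : ℕ, IsSummandP X (T.npow n)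

/-- `X ∈ Fac T`: there is a deflation `T' ↠ X` with `T' ∈ add T`. -/
def InFac (T X : PObj Λ) : Prop :=
  ∃ T' : PObj Λ, InAdd T T' ∧ ∃ p : PHom T' X, IsDeflation p

/-- `X ∈ Sub T`: there is an inflation `X ↣ T'` with `T' ∈ add T`. -/
def InSub (T X : PObj Λ) : Prop :=
  ∃ T' : PObj Λ, InAdd T T' ∧ ∃ i : PHom X T', IsInflation i

/-- Tilting objects of `𝒫(Λ)`: rigid, and every projective object of `𝒫(Λ)` admits a
conflation `P ↣ T⁰ ↠ T¹` with `T⁰, T¹ ∈ add T`. -/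
def IsTilting (T : PObj Λ) : Prop :=
  Ext1Vanishes T T ∧
  ∀ P : PObj Λ, IsProjObj P →
    ∃ (T0 T1 : PObj Λ) (i : PHom P T0) (p : PHom T0 T1),
      InAdd T T0 ∧ InAdd T T1 ∧ IsConflation i p

/-- Cotilting objects of `𝒫(Λ)`: rigid, and every injective object of `𝒫(Λ)` admits a
conflation `T₁ ↣ T₀ ↠ I` with `T₀, T₁ ∈ add T`. -/
def IsCotilting (T : PObj Λ) : Prop :=
  Ext1Vanishes T T ∧
  ∀ I : PObj Λ, IsInjObj I →
    ∃ (T1 T0 : PObj Λ) (i : PHom T1 T0) (p : PHom T0 I),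
      InAdd T T1 ∧ InAdd T T0 ∧ IsConflation i p

/-- Isomorphism of objects of `𝒫(Λ)`. -/
def IsIsoP (X Y : PObj Λ) : Prop :=
  ∃ (u : PHom X Y) (v : PHom Y X), u.comp v = PHom.id Y ∧ v.comp u = PHom.id X

/-- The zero objects of `𝒫(Λ)`. -/
def IsZeroP (X : PObj Λ) : Prop := Subsingleton X.P ∧ Subsingleton X.Q

/-- Indecomposable objects of `𝒫(Λ)`: nonzero, and every idempotent endomorphism is `0` or `1`. -/
def IsIndecP (X : PObj Λ) : Prop :=
  ¬ IsZeroP X ∧ ∀ e : PHom X X, e.comp e = e → e = PHom.id X ∨ e = PHom.zero X X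

/-- Basic objects of `𝒫(Λ)`: no nonzero object occurs twice as a direct summand. -/
def IsBasicP (T : PObj Λ) : Prop :=
  ∀ X : PObj Λ, IsSummandP (X.prod X) T → IsZeroP X

/-- `T` has exactly `n` pairwise non-isomorphic indecomposable direct summands satisfying `C`. -/
def NumIndecSummandsWith (T : PObj Λ) (C : PObj Λ → Prop) (n : ℕ) : Prop :=
  ∃ F : Fin n → PObj Λ,
    (∀ i, IsIndecP (F i) ∧ IsSummandP (F i) T ∧ C (F i)) ∧
    (∀ i j, i ≠ j → ¬ IsIsoP (F i) (F j)) ∧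
    ∀ X : PObj Λ, IsIndecP X → IsSummandP X T → C X → ∃ i, IsIsoP X (F i)

/-- `T` has exactly `n` pairwise non-isomorphic indecomposable direct summands. -/
def NumIndecSummandsP (T : PObj Λ) (n : ℕ) : Prop :=
  NumIndecSummandsWith T (fun _ => True) n

/-- Indecomposable modules. -/
def IsIndecMod (X : Type u) [AddCommGroup X] [Module Λ X] : Prop :=
  Nontrivial X ∧ ∀ N : Submodule Λ X, (∃ c, IsCompl N c) → N = ⊥ ∨ N = ⊤

/-- The module `M` has exactly `n` pairwise non-isomorphic indecomposable direct summands. -/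
def NumIndecSummandsMod (M : Type u) [AddCommGroup M] [Module Λ M] (n : ℕ) : Prop :=
  ∃ F : Fin n → Submodule Λ M,
    (∀ i, (∃ c, IsCompl (F i) c) ∧ IsIndecMod (Λ := Λ) (F i)) ∧
    (∀ i j, i ≠ j → ¬ Nonempty ((F i) ≃ₗ[Λ] (F j))) ∧
    ∀ N : Submodule Λ M, (∃ c, IsCompl N c) → IsIndecMod (Λ := Λ) N →
      ∃ i, Nonempty (N ≃ₗ[Λ] F i)

variable (Λ) in
/-- `|Λ|`: the number of pairwise non-isomorphic indecomposable projective `Λ`-modules,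
i.e. of indecomposable direct summands of the regular module `Λ`. -/
def NumIndecProj (n : ℕ) : Prop := NumIndecSummandsMod (Λ := Λ) (M := Λ) n

/-- `X` is a direct summand of the module `M`. -/
def ModIsSummand (X M : Type u) [AddCommGroup X] [Module Λ X] [AddCommGroup M] [Module Λ M] :
    Prop :=
  ∃ (s : X →ₗ[Λ] M) (r : M →ₗ[Λ] X), r.comp s = LinearMap.id

/-- `X ∈ add M` for modules. -/
def ModInAdd (M X : Type u) [AddCommGroup M] [Module Λ M] [AddCommGroup X] [Module Λ X] : Prop :=
  ∃ n : ℕ, ModIsSummand (Λ := Λ) X (Fin n → M)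

/-- Basic modules: no nonzero module occurs twice as a direct summand. -/
def IsBasicMod (M : Type u) [AddCommGroup M] [Module Λ M] : Prop :=
  ∀ (X : Type u) [AddCommGroup X] [Module Λ X], ModIsSummand (Λ := Λ) (X × X) M → Subsingleton X

/-- A minimal projective presentation `P₁ →f→ P₀ →g→ M → 0`. -/
structure IsMinProjPres {P1 P0 M : Type u} [AddCommGroup P1] [Module Λ P1]
    [AddCommGroup P0] [Module Λ P0] [AddCommGroup M] [Module Λ M]
    (f : P1 →ₗ[Λ] P0) (g : P0 →ₗ[Λ] M) : Prop where
  finP1 : Module.Finite Λ P1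
  projP1 : Module.Projective Λ P1
  finP0 : Module.Finite Λ P0
  projP0 : Module.Projective Λ P0
  surj : Surjective g
  exact_seq : LinearMap.range f = LinearMap.ker g
  small0 : ∀ K : Submodule Λ P0, K ⊔ LinearMap.ker g = ⊤ → K = ⊤
  small1 : ∀ K : Submodule Λ P1, K ⊔ LinearMap.ker f = ⊤ → K = ⊤

/-- `M` is `τ`-rigid, i.e. `Hom_Λ(M, τM) = 0`; equivalently (Auslander–Smalø,
Adachi–Iyama–Reiten), for a minimal projective presentation `P₁ →f→ P₀ → M → 0` every
homomorphism `P₁ → M` factors through `f`. -/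
def IsTauRigid (M : Type u) [AddCommGroup M] [Module Λ M] : Prop :=
  Module.Finite Λ M ∧
  ∀ (P1 P0 : Type u) [AddCommGroup P1] [Module Λ P1] [AddCommGroup P0] [Module Λ P0]
    (f : P1 →ₗ[Λ] P0) (g : P0 →ₗ[Λ] M), IsMinProjPres f g →
      ∀ h : P1 →ₗ[Λ] M, ∃ k : P0 →ₗ[Λ] M, h = k.comp f

/-- Support `τ`-tilting pairs: `(M, P)` is `τ`-rigid and `|M| + |P| = |Λ|`. -/
def IsSuppTauTiltingPair (M P : Type u) [AddCommGroup M] [Module Λ M]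
    [AddCommGroup P] [Module Λ P] : Prop :=
  IsTauRigid (Λ := Λ) M ∧ Module.Finite Λ P ∧ Module.Projective Λ P ∧
  (∀ φ : P →ₗ[Λ] M, φ = 0) ∧
  ∀ n m k, NumIndecSummandsMod (Λ := Λ) M n → NumIndecSummandsMod (Λ := Λ) P m →
    NumIndecProj Λ k → n + m = k

variable (Λ) in
/-- `X ∈ Cok M`: `X` is the cokernel of a morphism between objects of `add M`. -/
def InCokMod (M : Type u) [AddCommGroup M] [Module Λ M]
    (X : Type u) [AddCommGroup X] [Module Λ X] : Prop :=
  ∃ (A B : ModuleCat.{u} Λ) (φ : A →ₗ[Λ] B),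
    ModInAdd (Λ := Λ) M A ∧ ModInAdd (Λ := Λ) M B ∧
    Nonempty (X ≃ₗ[Λ] (B ⧸ LinearMap.range φ))

variable (Λ) in
/-- `X ∈ Fac M`: `X` is a quotient of an object of `add M`. -/
def InFacMod (M : Type u) [AddCommGroup M] [Module Λ M]
    (X : Type u) [AddCommGroup X] [Module Λ X] : Prop :=
  ∃ (A : ModuleCat.{u} Λ), ModInAdd (Λ := Λ) M A ∧ ∃ p : A →ₗ[Λ] X, Surjective p

variable (Λ) in
/-- The projective-injective object `(Λ →id→ Λ)` of `𝒫(Λ)`. -/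
def idPObj : PObj Λ where
  P := Λ
  Q := Λ
  fgP := inferInstance
  projP := inferInstance
  fgQ := inferInstance
  projQ := inferInstance
  f := LinearMap.id

variable (Λ) in
/-- The object `(P → 0)` of `𝒫(Λ)` associated with a f.g. projective module `P`. -/
def cPObj (P : Type u) [AddCommGroup P] [Module Λ P]
    (h1 : Module.Finite Λ P) (h2 : Module.Projective Λ P) : PObj Λ where
  P := P
  Q := PUnit
  fgP := h1
  projP := h2
  fgQ := inferInstance
  projQ := inferInstance
  f := 0

/-- The object of `𝒫(Λ)` given by a minimal projective presentation. -/
def IsMinProjPres.pobj {P1 P0 M : Type u} [AddCommGroup P1] [Module Λ P1]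
    [AddCommGroup P0] [Module Λ P0] [AddCommGroup M] [Module Λ M]
    {f : P1 →ₗ[Λ] P0} {g : P0 →ₗ[Λ] M} (h : IsMinProjPres f g) : PObj Λ :=
  { P := P1, Q := P0, fgP := h.finP1, projP := h.projP1, fgQ := h.finP0, projQ := h.projP0,
    f := f }

/-- Objects isomorphic to one of the form `(P →id→ P)` (the projective-injective,
i.e. contractible, objects of `𝒫(Λ)`). -/
def IsIdForm (X : PObj Λ) : Prop :=
  ∃ e : X.P ≃ₗ[Λ] X.Q, X.f = (e : X.P →ₗ[Λ] X.Q)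

/-- `C` is the maximal direct summand of `T` of type `(c)`, i.e. `T ≅ T' ⊕ C` where `C` has zero
codomain and `T'` has no nonzero summand with zero codomain. -/
def IsTypeCPart (T C : PObj Λ) : Prop :=
  Subsingleton C.Q ∧ ∃ T' : PObj Λ, IsIsoP T (T'.prod C) ∧
    ∀ X : PObj Λ, IsSummandP X T' → Subsingleton X.Q → IsZeroP X

/-- `X ∈ Cone(T, T)`: there is a conflation `T₁ ↣ T₀ ↠ X` with `T₀, T₁ ∈ add T`. -/
def InCone (T X : PObj Λ) : Prop :=
  ∃ (T1 T0 : PObj Λ) (i : PHom T1 T0) (p : PHom T0 X),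
    InAdd T T1 ∧ InAdd T T0 ∧ IsConflation i p


/-- The key linear-algebra characterization of `Ext¹(T,M) = 0` in `𝒫(Λ)`. -/
def HasFactor (T M : PObj Λ) : Prop :=
  ∀ h : T.P →ₗ[Λ] M.Q, ∃ (u : T.P →ₗ[Λ] M.P) (v : T.Q →ₗ[Λ] M.Q),
    h = v.comp T.f + M.f.comp u

lemma ext1_iff_hasFactor (T M : PObj Λ) : Ext1Vanishes T M ↔ HasFactor T M := by
  constructor
  · intro hv h
    -- construct the extension with twisting map `h`
    set E : PObj Λ :=
      { P := M.P × T.P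
        Q := M.Q × T.Q
        fgP := by haveI := M.fgP; haveI := T.fgP; infer_instance
        projP := by haveI := M.projP; haveI := T.projP; infer_instance
        fgQ := by haveI := M.fgQ; haveI := T.fgQ; infer_instance
        projQ := by haveI := M.projQ; haveI := T.projQ; infer_instance
        f := LinearMap.prod
          (M.f.comp (LinearMap.fst Λ M.P T.P) + h.comp (LinearMap.snd Λ M.P T.P))
          (T.f.comp (LinearMap.snd Λ M.P T.P)) } with hE
    have icomm : E.f.comp (LinearMap.inl Λ M.P T.P)
        = (LinearMap.inl Λ M.Q T.Q).comp M.f := by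
      ext x <;> simp [hE, E]
    have pcomm : T.f.comp (LinearMap.snd Λ M.P T.P)
        = (LinearMap.snd Λ M.Q T.Q).comp E.f := by
      ext x <;> simp [hE, E]
    set i : PHom M E := ⟨LinearMap.inl Λ M.P T.P, LinearMap.inl Λ M.Q T.Q, icomm⟩ with hi
    set p : PHom E T := ⟨LinearMap.snd Λ M.P T.P, LinearMap.snd Λ M.Q T.Q, pcomm⟩ with hp
    have hconf : IsConflation i p := by
      refine ⟨?_, ?_, ?_, ?_, ?_, ?_⟩
      · exact LinearMap.inl_injective
      · exact LinearMap.inl_injective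
      · exact fun x => ⟨(0, x), rfl⟩
      · exact fun x => ⟨(0, x), rfl⟩
      · ext ⟨a, b⟩
        simp [hi, hp, LinearMap.mem_range, Prod.ext_iff, eq_comm]
        exact ⟨fun ⟨y, hy⟩ => (congrArg Prod.snd hy).symm, fun hb => ⟨a, Prod.ext rfl hb.symm⟩⟩
      · ext ⟨a, b⟩
        simp [hi, hp, LinearMap.mem_range, Prod.ext_iff, eq_comm]
        exact ⟨fun ⟨y, hy⟩ => (congrArg Prod.snd hy).symm, fun hb => ⟨a, Prod.ext rfl hb.symm⟩⟩
    obtain ⟨s, hs⟩ := hv E i p hconf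
    -- extract u, v from the section s
    have hsa : (LinearMap.snd Λ M.P T.P).comp s.a = LinearMap.id :=
      congrArg PHom.a hs
    have hsb : (LinearMap.snd Λ M.Q T.Q).comp s.b = LinearMap.id :=
      congrArg PHom.b hs
    refine ⟨-(LinearMap.fst Λ M.P T.P).comp s.a, (LinearMap.fst Λ M.Q T.Q).comp s.b, ?_⟩
    ext t
    have hcomm := LinearMap.congr_fun s.comm t
    have h2 : (s.a t).2 = t := LinearMap.congr_fun hsa t
    have h2b : (s.b (T.f t)).2 = T.f t := LinearMap.congr_fun hsb (T.f t)
    simp only [LinearMap.comp_apply, hE, LinearMap.prod_apply, Pi.prod,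
      LinearMap.add_apply, LinearMap.fst_apply, LinearMap.snd_apply] at hcomm ⊢
    have h1 : M.f (s.a t).1 + h (s.a t).2 = (s.b (T.f t)).1 :=
      congrArg Prod.fst hcomm
    rw [h2] at h1
    simp only [LinearMap.add_apply, LinearMap.comp_apply, LinearMap.neg_apply,
      LinearMap.fst_apply, map_neg]
    linear_combination (norm := module) h1
  · rintro hf E i p ⟨ia, ib, sa, sb, ea, eb⟩
    haveI := T.projP
    haveI := T.projQ
    obtain ⟨la, hla⟩ := Module.projective_lifting_property p.a LinearMap.id sa
    obtain ⟨lb, hlb⟩ := Module.projective_lifting_property p.b LinearMap.id sb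
    -- the defect
    set d : T.P →ₗ[Λ] E.Q := E.f.comp la - lb.comp T.f with hd
    have hdker : ∀ x, d x ∈ LinearMap.ker p.b := by
      intro x
      have hc := LinearMap.congr_fun p.comm (la x)
      have hla' : p.a (la x) = x := LinearMap.congr_fun hla x
      have hlb' : p.b (lb (T.f x)) = T.f x := LinearMap.congr_fun hlb (T.f x)
      simp only [LinearMap.comp_apply] at hc hla' hlb'
      simp only [hd, LinearMap.mem_ker, LinearMap.sub_apply, LinearMap.comp_apply,
        map_sub, hlb']
      rw [← hc, hla', sub_self]
    have hdrange : ∀ x, d x ∈ LinearMap.range i.b := by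
      intro x; rw [eb]; exact hdker x
    set e : M.Q ≃ₗ[Λ] LinearMap.range i.b := LinearEquiv.ofInjective i.b ib with he
    set hmap : T.P →ₗ[Λ] M.Q :=
      (e.symm : LinearMap.range i.b →ₗ[Λ] M.Q).comp
        (LinearMap.codRestrict (LinearMap.range i.b) d hdrange) with hhm
    have hibh : ∀ x, i.b (hmap x) = d x := by
      intro x
      have : e (hmap x) = ⟨d x, hdrange x⟩ := by
        simp only [hhm, LinearMap.comp_apply]
        exact e.apply_symm_apply _
      have := congrArg Subtype.val this
      simpa [he, LinearEquiv.ofInjective_apply] using this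
    obtain ⟨u, v, huv⟩ := hf hmap
    -- build the section
    have scomm : E.f.comp (la - i.a.comp u) = (lb + i.b.comp v).comp T.f := by
      ext x
      have h1 : i.b (hmap x) = d x := hibh x
      have h2 : hmap x = v (T.f x) + M.f (u x) := LinearMap.congr_fun huv x
      have h3 := LinearMap.congr_fun i.comm (u x)
      simp only [LinearMap.comp_apply] at h3
      simp only [LinearMap.comp_apply, LinearMap.sub_apply, LinearMap.add_apply,
        map_sub, map_add]
      rw [h2] at h1
      simp only [hd, LinearMap.sub_apply, LinearMap.comp_apply, map_add] at h1
      rw [h3]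
      rw [eq_sub_iff_add_eq] at h1
      rw [← h1]
      abel
    refine ⟨⟨la - i.a.comp u, lb + i.b.comp v, scomm⟩, ?_⟩
    have hpia : ∀ x, p.a (i.a x) = 0 := by
      intro x
      have : i.a x ∈ LinearMap.ker p.a := by rw [← ea]; exact ⟨x, rfl⟩
      exact this
    have hpib : ∀ x, p.b (i.b x) = 0 := by
      intro x
      have : i.b x ∈ LinearMap.ker p.b := by rw [← eb]; exact ⟨x, rfl⟩
      exact this
    have hA : p.a.comp (la - i.a.comp u) = LinearMap.id := by
      ext x
      have := LinearMap.congr_fun hla x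
      simp only [LinearMap.comp_apply, LinearMap.sub_apply, map_sub, LinearMap.id_apply]
        at this ⊢
      rw [this, hpia, sub_zero]
    have hB : p.b.comp (lb + i.b.comp v) = LinearMap.id := by
      ext x
      have := LinearMap.congr_fun hlb x
      simp only [LinearMap.comp_apply, LinearMap.add_apply, map_add, LinearMap.id_apply]
        at this ⊢
      rw [this, hpib, add_zero]
    show PHom.mk _ _ _ = PHom.id T
    simp only [PHom.comp, PHom.id]
    congr 1

lemma hasFactor_zero (T : PObj Λ) : HasFactor T (zeroPObj Λ) := by
  intro h
  haveI : Subsingleton (zeroPObj Λ).Q := inferInstanceAs (Subsingleton PUnit)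
  exact ⟨0, 0, Subsingleton.elim _ _⟩

lemma hasFactor_prod (T X Y : PObj Λ) (hX : HasFactor T X) (hY : HasFactor T Y) :
    HasFactor T (X.prod Y) := by
  intro h
  obtain ⟨u1, v1, h1⟩ := hX ((LinearMap.fst Λ X.Q Y.Q).comp h)
  obtain ⟨u2, v2, h2⟩ := hY ((LinearMap.snd Λ X.Q Y.Q).comp h)
  refine ⟨LinearMap.prod u1 u2, LinearMap.prod v1 v2, ?_⟩
  ext t
  have e1 := LinearMap.congr_fun h1 t
  have e2 := LinearMap.congr_fun h2 t
  simp only [LinearMap.comp_apply, LinearMap.fst_apply, LinearMap.snd_apply,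
    LinearMap.add_apply] at e1 e2
  simp only [PObj.prod, LinearMap.add_apply, LinearMap.comp_apply, LinearMap.prod_apply,
    Pi.prod, LinearMap.prodMap_apply, Prod.mk_add_mk]
  exact Prod.ext e1 e2

lemma hasFactor_summand (T X Y : PObj Λ) (hY : HasFactor T Y) (hsum : IsSummandP X Y) :
    HasFactor T X := by
  obtain ⟨s, r, hrs⟩ := hsum
  intro h
  obtain ⟨u, v, huv⟩ := hY (s.b.comp h)
  refine ⟨r.a.comp u, r.b.comp v, ?_⟩
  ext t
  have e1 := LinearMap.congr_fun huv t
  have e2 := LinearMap.congr_fun r.comm (u t)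
  have e3 : r.b (s.b (h t)) = h t := by
    have := congrArg PHom.b hrs
    exact LinearMap.congr_fun this (h t)
  simp only [LinearMap.comp_apply, LinearMap.add_apply] at e1 e2 e3 ⊢
  rw [← e3, e1, map_add, e2]

lemma hasFactor_npow (T : PObj Λ) (hT : HasFactor T T) (n : ℕ) :
    HasFactor T (T.npow n) := by
  induction n with
  | zero => exact hasFactor_zero T
  | succ k ih => exact hasFactor_prod T _ T ih hT

lemma hasFactor_of_inAdd (T X : PObj Λ) (hT : HasFactor T T) (hX : InAdd T X) :
    HasFactor T X := by
  obtain ⟨n, hs⟩ := hX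
  exact hasFactor_summand T X _ (hasFactor_npow T hT n) hs

lemma hasFactor_of_surj (T X M : PObj Λ) (hX : HasFactor T X) (q : PHom X M)
    (hq : Surjective q.b) : HasFactor T M := by
  intro h
  haveI := T.projP
  obtain ⟨l, hl⟩ := Module.projective_lifting_property q.b h hq
  obtain ⟨u, v, huv⟩ := hX l
  refine ⟨q.a.comp u, q.b.comp v, ?_⟩
  ext t
  have e1 := LinearMap.congr_fun huv t
  have e2 := LinearMap.congr_fun q.comm (u t)
  have e3 := LinearMap.congr_fun hl t
  simp only [LinearMap.comp_apply, LinearMap.add_apply] at e1 e2 e3 ⊢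
  rw [← e3, e1, map_add, e2]

lemma inFac_self (T : PObj Λ) : InFac T T := by
  haveI : Subsingleton (T.npow 0).P := inferInstanceAs (Subsingleton PUnit)
  haveI : Subsingleton (T.npow 0).Q := inferInstanceAs (Subsingleton PUnit)
  haveI : Subsingleton (zeroPObj Λ).P := inferInstanceAs (Subsingleton PUnit)
  haveI : Subsingleton (zeroPObj Λ).Q := inferInstanceAs (Subsingleton PUnit)
  refine ⟨T, ⟨1, ?_⟩, PHom.id T, zeroPObj Λ, PHom.zero _ _, ?_⟩
  · -- T is a summand of T.npow 1 = zeroPObj.prod T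
    refine ⟨⟨LinearMap.inr Λ _ _, LinearMap.inr Λ _ _, ?_⟩,
      ⟨LinearMap.snd Λ _ _, LinearMap.snd Λ _ _, ?_⟩, ?_⟩
    · ext x
      refine Prod.ext (Subsingleton.elim _ _) ?_
      exact rfl
    · ext x
      exact rfl
    · show PHom.mk _ _ _ = PHom.id T
      simp only [PHom.comp, PHom.id]
      congr 1 <;> ext x <;> simp
  · refine ⟨?_, ?_, ?_, ?_, ?_, ?_⟩
    · exact fun a b _ => Subsingleton.elim a b
    · exact fun a b _ => Subsingleton.elim a b
    · exact fun x => ⟨x, rfl⟩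
    · exact fun x => ⟨x, rfl⟩
    · simp [PHom.zero, PHom.id, LinearMap.ker_id]
    · simp [PHom.zero, PHom.id, LinearMap.ker_id]

/-- For an object `T` of `𝒫(Λ)`, `Ext¹(T,T) = 0` iff `Ext¹(T,M) = 0` for every
`M ∈ Fac T`. -/
theorem rigid_iff_ext_vanishes_on_fac (R : Type u) [CommRing R] [IsArtinianRing R]
    [Algebra R Λ] [Module.Finite R Λ]
    (T : PObj Λ) :
    Ext1Vanishes T T ↔ ∀ M : PObj Λ, InFac T M → Ext1Vanishes T M := by
  constructor
  · intro hT M hM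
    rw [ext1_iff_hasFactor] at hT ⊢
    obtain ⟨T', hT', q, _, i, hconf⟩ := hM
    exact hasFactor_of_surj T T' M (hasFactor_of_inAdd T T' hT hT') q hconf.surj_b
  · intro h
    exact h T (inFac_self T)
end

section
/- Let Λ be an artin algebra and let M be a rigid object of 𝒫(Λ) (i.e. Ext^1_{𝒫}(M, M) = 0). Then Fac M ∩ Sub M = add M, where Fac M (resp. Sub M) is the class of objects admitting a deflation from (resp. inflation into) an object of add M. -/
/-!
Common setting: `Λ` is an artin algebra (over a commutative artinian ring `R`, added in the
theorem statements).  `PObj Λ` is the exact category `𝒫(Λ) = Mor(proj-Λ)` of morphisms between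
finitely generated projective `Λ`-modules, with conflations the degreewise exact sequences.
-/

open Function

universe u

variable (Λ : Type u) [Ring Λ]

variable {Λ}

/-! ### Auxiliary lemmas -/

section Aux

lemma PHom.ext' {X Y : PObj Λ} {f g : PHom X Y} (ha : f.a = g.a) (hb : f.b = g.b) : f = g := by
  cases f; cases g; simp_all

lemma exists_retraction_of_exact {A B C : Type u} [AddCommGroup A] [Module Λ A] [AddCommGroup B]
    [Module Λ B] [AddCommGroup C] [Module Λ C] (hC : Module.Projective Λ C)
    (i : A →ₗ[Λ] B) (π : B →ₗ[Λ] C) (hi : Injective i) (hπ : Surjective π)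
    (hex : LinearMap.range i = LinearMap.ker π) :
    ∃ s : B →ₗ[Λ] A, s.comp i = LinearMap.id := by
  haveI := hC
  obtain ⟨σ, hσ⟩ := Module.projective_lifting_property π LinearMap.id hπ
  set e : B →ₗ[Λ] B := LinearMap.id - σ.comp π with he
  have hrange : ∀ b, e b ∈ LinearMap.range i := by
    intro b
    rw [hex, LinearMap.mem_ker]
    have := LinearMap.congr_fun hσ (π b)
    simp only [LinearMap.comp_apply, LinearMap.id_apply] at this ⊢
    simp [he, LinearMap.sub_apply, this]
  refine ⟨(LinearEquiv.ofInjective i hi).symm.toLinearMap.comp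
    (e.codRestrict (LinearMap.range i) hrange), ?_⟩
  ext a
  have hea : e (i a) = i a := by
    have : π (i a) = 0 := by
      have : i a ∈ LinearMap.ker π := hex ▸ LinearMap.mem_range_self i a
      exact this
    simp [he, this]
  simp only [LinearMap.comp_apply, LinearMap.codRestrict_apply, LinearMap.id_apply,
    LinearEquiv.coe_coe]
  rw [LinearEquiv.symm_apply_eq]
  ext
  simp [hea, LinearEquiv.ofInjective_apply]

/-- Retractions of the two components of an inflation. -/
lemma inflation_retractions {X Y : PObj Λ} (i : PHom X Y) (h : IsInflation i) :
    ∃ (s : Y.P →ₗ[Λ] X.P) (t : Y.Q →ₗ[Λ] X.Q),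
      s.comp i.a = LinearMap.id ∧ t.comp i.b = LinearMap.id := by
  obtain ⟨C, π, hc⟩ := h
  obtain ⟨s, hs⟩ := exists_retraction_of_exact C.projP i.a π.a hc.inj_a hc.surj_a hc.exact_a
  obtain ⟨t, ht⟩ := exists_retraction_of_exact C.projQ i.b π.b hc.inj_b hc.surj_b hc.exact_b
  exact ⟨s, t, hs, ht⟩

/-- A section of the `Q`-component of a deflation. -/
lemma deflation_section {Y Z : PObj Λ} (p : PHom Y Z) (h : IsDeflation p) :
    ∃ ρ : Z.Q →ₗ[Λ] Y.Q, p.b.comp ρ = LinearMap.id := by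
  obtain ⟨K, k, hc⟩ := h
  haveI := Z.projQ
  exact Module.projective_lifting_property p.b LinearMap.id hc.surj_b

/-- `IsSummandP` is reflexive. -/
lemma isSummandP_refl (X : PObj Λ) : IsSummandP X X :=
  ⟨PHom.id X, PHom.id X, PHom.ext' (by simp [PHom.comp, PHom.id]) (by simp [PHom.comp, PHom.id])⟩

/-- `IsSummandP` is transitive. -/
lemma isSummandP_trans {X Y Z : PObj Λ} (h1 : IsSummandP X Y) (h2 : IsSummandP Y Z) :
    IsSummandP X Z := by
  obtain ⟨s1, r1, h1⟩ := h1
  obtain ⟨s2, r2, h2⟩ := h2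
  refine ⟨s2.comp s1, r1.comp r2, PHom.ext' ?_ ?_⟩
  · have e2 : r2.a.comp s2.a = LinearMap.id := congrArg PHom.a h2
    have e1 : r1.a.comp s1.a = LinearMap.id := congrArg PHom.a h1
    ext x
    have h2' := LinearMap.congr_fun e2 (s1.a x)
    have h1' := LinearMap.congr_fun e1 x
    simp only [PHom.comp, PHom.id, LinearMap.comp_apply, LinearMap.id_apply] at *
    rw [h2', h1']
  · have e2 : r2.b.comp s2.b = LinearMap.id := congrArg PHom.b h2
    have e1 : r1.b.comp s1.b = LinearMap.id := congrArg PHom.b h1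
    ext x
    have h2' := LinearMap.congr_fun e2 (s1.b x)
    have h1' := LinearMap.congr_fun e1 x
    simp only [PHom.comp, PHom.id, LinearMap.comp_apply, LinearMap.id_apply] at *
    rw [h2', h1']

/-- Product of morphisms in `𝒫(Λ)`. -/
def PHom.prodMap {A B C D : PObj Λ} (f : PHom A B) (g : PHom C D) :
    PHom (A.prod C) (B.prod D) where
  a := f.a.prodMap g.a
  b := f.b.prodMap g.b
  comm := by
    ext x
    have h1 := LinearMap.congr_fun f.comm x.1
    have h2 := LinearMap.congr_fun g.comm x.2
    simp only [LinearMap.comp_apply] at h1 h2 ⊢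
    exact Prod.ext h1 h2

lemma isSummandP_prod {A A' B B' : PObj Λ} (h1 : IsSummandP A A') (h2 : IsSummandP B B') :
    IsSummandP (A.prod B) (A'.prod B') := by
  obtain ⟨s1, r1, h1⟩ := h1
  obtain ⟨s2, r2, h2⟩ := h2
  have e1a : r1.a.comp s1.a = LinearMap.id := congrArg PHom.a h1
  have e1b : r1.b.comp s1.b = LinearMap.id := congrArg PHom.b h1
  have e2a : r2.a.comp s2.a = LinearMap.id := congrArg PHom.a h2
  have e2b : r2.b.comp s2.b = LinearMap.id := congrArg PHom.b h2
  refine ⟨s1.prodMap s2, r1.prodMap r2, PHom.ext' ?_ ?_⟩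
  · ext x
    have u1 := LinearMap.congr_fun e1a x.1
    have u2 := LinearMap.congr_fun e2a x.2
    simp only [LinearMap.comp_apply, LinearMap.id_apply] at u1 u2
    simp [PHom.comp, PHom.prodMap, PHom.id, PObj.prod, u1, u2, Prod.ext_iff]
    exact ⟨u1, u2⟩
  · ext x
    have u1 := LinearMap.congr_fun e1b x.1
    have u2 := LinearMap.congr_fun e2b x.2
    simp only [LinearMap.comp_apply, LinearMap.id_apply] at u1 u2
    simp [PHom.comp, PHom.prodMap, PHom.id, PObj.prod, u1, u2, Prod.ext_iff]
    exact ⟨u1, u2⟩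


/-- Dropping a zero factor. -/
lemma isSummandP_prod_zero (X : PObj Λ) : IsSummandP (X.prod (zeroPObj Λ)) X := by
  refine ⟨⟨LinearMap.fst Λ X.P PUnit.{u+1}, LinearMap.fst Λ X.Q PUnit.{u+1}, by ext x; rfl⟩,
    ⟨LinearMap.prod LinearMap.id 0, LinearMap.prod LinearMap.id 0, by ext x <;> rfl⟩,
    PHom.ext' ?_ ?_⟩
  · ext x
    exact Prod.ext rfl (@Subsingleton.elim PUnit.{u+1} _ _ _)
  · ext x
    exact Prod.ext rfl (@Subsingleton.elim PUnit.{u+1} _ _ _)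

/-- Associativity as a summand relation. -/
lemma isSummandP_assoc (A B C : PObj Λ) :
    IsSummandP (A.prod (B.prod C)) ((A.prod B).prod C) := by
  refine ⟨⟨(LinearEquiv.prodAssoc Λ A.P B.P C.P).symm.toLinearMap,
      (LinearEquiv.prodAssoc Λ A.Q B.Q C.Q).symm.toLinearMap, by
        ext x <;> rfl⟩,
    ⟨(LinearEquiv.prodAssoc Λ A.P B.P C.P).toLinearMap,
      (LinearEquiv.prodAssoc Λ A.Q B.Q C.Q).toLinearMap, by
        ext x <;> rfl⟩,
    PHom.ext' ?_ ?_⟩ <;>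
  · ext x
    rfl

lemma isSummandP_npow_add (M : PObj Λ) : ∀ n m : ℕ,
    IsSummandP ((M.npow n).prod (M.npow m)) (M.npow (n + m))
  | n, 0 => isSummandP_prod_zero (M.npow n)
  | n, m + 1 => by
    have IH := isSummandP_npow_add M n m
    have h1 := isSummandP_assoc (M.npow n) (M.npow m) M
    have h2 := isSummandP_prod IH (isSummandP_refl M)
    exact isSummandP_trans h1 h2

lemma inAdd_of_summand {M X Y : PObj Λ} (hY : InAdd M Y) (hXY : IsSummandP X Y) : InAdd M X := by
  obtain ⟨n, hn⟩ := hY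
  exact ⟨n, isSummandP_trans hXY hn⟩

lemma inAdd_prod {M A B : PObj Λ} (hA : InAdd M A) (hB : InAdd M B) : InAdd M (A.prod B) := by
  obtain ⟨n, hn⟩ := hA
  obtain ⟨m, hm⟩ := hB
  exact ⟨n + m, isSummandP_trans (isSummandP_prod hn hm) (isSummandP_npow_add M n m)⟩

lemma inAdd_self (M : PObj Λ) : InAdd M M := by
  refine ⟨1, ⟨⟨LinearMap.inr Λ PUnit.{u+1} M.P, LinearMap.inr Λ PUnit.{u+1} M.Q, by
      ext x <;> rfl⟩,
    ⟨LinearMap.snd Λ PUnit.{u+1} M.P, LinearMap.snd Λ PUnit.{u+1} M.Q, by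
      ext x <;> rfl⟩, PHom.ext' ?_ ?_⟩⟩ <;>
  · ext x
    rfl

/-! ### Homotopy-vanishing predicate (concrete form of `Ext¹ = 0`) -/

/-- `Ext¹(Y, Z) = 0`, in concrete "null-homotopy" form. -/
def Htpy (Y Z : PObj Λ) : Prop :=
  ∀ g : Y.P →ₗ[Λ] Z.Q, ∃ (α : Y.P →ₗ[Λ] Z.P) (β : Y.Q →ₗ[Λ] Z.Q),
    g = Z.f.comp α + β.comp Y.f

lemma htpy_of_ext1 {M : PObj Λ} (hM : Ext1Vanishes M M) : Htpy M M := by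
  intro g
  set E : PObj Λ :=
    { P := M.P × M.P, Q := M.Q × M.Q
      fgP := by haveI := M.fgP; infer_instance
      projP := by haveI := M.projP; infer_instance
      fgQ := by haveI := M.fgQ; infer_instance
      projQ := by haveI := M.projQ; infer_instance
      f := LinearMap.prod
        (M.f.comp (LinearMap.fst Λ M.P M.P) + g.comp (LinearMap.snd Λ M.P M.P))
        (M.f.comp (LinearMap.snd Λ M.P M.P)) } with hE
  have conf : IsConflation (X := M) (Y := E) (Z := M)
      ⟨LinearMap.inl Λ M.P M.P, LinearMap.inl Λ M.Q M.Q, by ext x <;> simp [E]⟩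
      ⟨LinearMap.snd Λ M.P M.P, LinearMap.snd Λ M.Q M.Q, by ext x <;> simp [E]⟩ := by
    constructor
    · exact LinearMap.inl_injective
    · exact LinearMap.inl_injective
    · exact Prod.snd_surjective
    · exact Prod.snd_surjective
    · exact LinearMap.range_inl Λ M.P M.P ▸ (LinearMap.ker_snd Λ M.P M.P).symm ▸ rfl
    · exact LinearMap.range_inl Λ M.Q M.Q ▸ (LinearMap.ker_snd Λ M.Q M.Q).symm ▸ rfl
  obtain ⟨s, hs⟩ := hM E _ _ conf
  have hsa : ∀ x, (s.a x).2 = x := fun x => LinearMap.congr_fun (congrArg PHom.a hs) x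
  have hcomm := s.comm
  refine ⟨-((LinearMap.fst Λ M.P M.P).comp s.a), (LinearMap.fst Λ M.Q M.Q).comp s.b, ?_⟩
  ext x
  have h1 := congrArg Prod.fst (LinearMap.congr_fun hcomm x)
  simp only [E, LinearMap.comp_apply, LinearMap.prod_apply, Pi.prod, Function.prod, LinearMap.add_apply,
    LinearMap.fst_apply, LinearMap.snd_apply] at h1 ⊢
  rw [hsa x] at h1
  simp only [LinearMap.neg_apply, LinearMap.comp_apply, LinearMap.fst_apply, map_neg]
  exact eq_neg_add_iff_add_eq.mpr h1
  

lemma htpy_zero_left (Z : PObj Λ) : Htpy (zeroPObj Λ) Z := by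
  intro g
  refine ⟨0, 0, ?_⟩
  ext x
  have hx : x = 0 := @Subsingleton.elim PUnit.{u+1} _ _ _
  rw [hx]
  simp

lemma htpy_zero_right (Y : PObj Λ) : Htpy Y (zeroPObj Λ) := by
  intro g
  exact ⟨0, 0, LinearMap.ext fun x => @Subsingleton.elim PUnit.{u+1} _ _ _⟩

lemma htpy_prod_right {Y Z1 Z2 : PObj Λ} (h1 : Htpy Y Z1) (h2 : Htpy Y Z2) :
    Htpy Y (Z1.prod Z2) := by
  intro g
  obtain ⟨α1, β1, e1⟩ := h1 ((LinearMap.fst Λ Z1.Q Z2.Q).comp g)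
  obtain ⟨α2, β2, e2⟩ := h2 ((LinearMap.snd Λ Z1.Q Z2.Q).comp g)
  refine ⟨α1.prod α2, β1.prod β2, ?_⟩
  ext x
  have u1 := LinearMap.congr_fun e1 x
  have u2 := LinearMap.congr_fun e2 x
  simp only [LinearMap.comp_apply, LinearMap.fst_apply, LinearMap.snd_apply,
    LinearMap.add_apply, LinearMap.prod_apply, Pi.prod] at u1 u2 ⊢
  exact Prod.ext u1 u2

lemma htpy_prod_left {Y1 Y2 Z : PObj Λ} (h1 : Htpy Y1 Z) (h2 : Htpy Y2 Z) :
    Htpy (Y1.prod Y2) Z := by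
  intro g
  obtain ⟨α1, β1, e1⟩ := h1 (g.comp (LinearMap.inl Λ Y1.P Y2.P))
  obtain ⟨α2, β2, e2⟩ := h2 (g.comp (LinearMap.inr Λ Y1.P Y2.P))
  refine ⟨α1.coprod α2, β1.coprod β2, ?_⟩
  ext x
  have u1 := LinearMap.congr_fun e1 x.1
  have u2 := LinearMap.congr_fun e2 x.2
  simp only [LinearMap.comp_apply, LinearMap.add_apply] at u1 u2 ⊢
  have hid : (LinearMap.coprod (LinearMap.inl Λ Y1.P Y2.P) (LinearMap.inr Λ Y1.P Y2.P)) x = x := by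
    rw [LinearMap.coprod_inl_inr]; rfl
  have hg : g x = g ((LinearMap.inl Λ Y1.P Y2.P) x.1) + g ((LinearMap.inr Λ Y1.P Y2.P) x.2) := by
    conv_lhs => rw [← hid]
    erw [LinearMap.coprod_apply, map_add]
  calc g x = g ((LinearMap.inl Λ Y1.P Y2.P) x.1) + g ((LinearMap.inr Λ Y1.P Y2.P) x.2) := hg
    _ = (Z.f (α1 x.1) + β1 (Y1.f x.1)) + (Z.f (α2 x.2) + β2 (Y2.f x.2)) :=
        congrArg₂ (· + ·) u1 u2
    _ = Z.f ((α1.coprod α2) x) + (β1.coprod β2) ((Y1.prod Y2).f x) := by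
        change _ = Z.f (α1 x.1 + α2 x.2) + (β1 (Y1.f x.1) + β2 (Y2.f x.2))
        simp only [LinearMap.coprod_apply, PObj.prod, LinearMap.prodMap_apply, map_add]
        abel

lemma htpy_summand {Y Z Y' Z' : PObj Λ} (h : Htpy Y Z) (hY : IsSummandP Y' Y)
    (hZ : IsSummandP Z' Z) : Htpy Y' Z' := by
  intro g
  obtain ⟨sy, ry, hy⟩ := hY
  obtain ⟨sz, rz, hz⟩ := hZ
  obtain ⟨α, β, e⟩ := h ((sz.b.comp g).comp ry.a)
  refine ⟨(rz.a.comp α).comp sy.a, (rz.b.comp β).comp sy.b, ?_⟩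
  ext x
  have hya : ry.a (sy.a x) = x := LinearMap.congr_fun (congrArg PHom.a hy) x
  have hzb : ∀ q, rz.b (sz.b q) = q := fun q => LinearMap.congr_fun (congrArg PHom.b hz) q
  have e' := LinearMap.congr_fun e (sy.a x)
  simp only [LinearMap.comp_apply, LinearMap.add_apply] at e' ⊢
  rw [hya] at e'
  have : g x = rz.b (Z.f (α (sy.a x))) + rz.b (β (Y.f (sy.a x))) := by
    rw [← map_add, ← e', hzb]
  rw [this]
  have c1 : rz.b (Z.f (α (sy.a x))) = Z'.f (rz.a (α (sy.a x))) :=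
    (LinearMap.congr_fun rz.comm (α (sy.a x))).symm
  have c2 : Y.f (sy.a x) = sy.b (Y'.f x) := LinearMap.congr_fun sy.comm x
  rw [c1, c2]

lemma htpy_npow {M : PObj Λ} (hM : Htpy M M) : ∀ n m, Htpy (M.npow n) (M.npow m) := by
  have hR : ∀ m, Htpy M (M.npow m) := by
    intro m
    induction m with
    | zero => exact htpy_zero_right M
    | succ m ih => exact htpy_prod_right ih hM
  intro n m
  induction n with
  | zero => exact htpy_zero_left _
  | succ n ih => exact htpy_prod_left ih (hR m)

lemma htpy_of_inAdd {M Y Z : PObj Λ} (hM : Ext1Vanishes M M) (hY : InAdd M Y)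
    (hZ : InAdd M Z) : Htpy Y Z := by
  obtain ⟨n, hn⟩ := hY
  obtain ⟨m, hm⟩ := hZ
  exact htpy_summand (htpy_npow (htpy_of_ext1 hM) n m) hn hm


lemma id_isDeflation (X : PObj Λ) : IsDeflation (PHom.id X) := by
  refine ⟨zeroPObj Λ, PHom.zero _ _, ?_, ?_, ?_, ?_, ?_, ?_⟩
  · exact fun a b _ => @Subsingleton.elim PUnit.{u+1} _ a b
  · exact fun a b _ => @Subsingleton.elim PUnit.{u+1} _ a b
  · exact fun x => ⟨x, rfl⟩
  · exact fun x => ⟨x, rfl⟩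
  · show LinearMap.range (0 : _ →ₗ[Λ] _) = LinearMap.ker LinearMap.id
    simp
  · show LinearMap.range (0 : _ →ₗ[Λ] _) = LinearMap.ker LinearMap.id
    simp

lemma id_isInflation (X : PObj Λ) : IsInflation (PHom.id X) := by
  refine ⟨zeroPObj Λ, PHom.zero _ _, ?_, ?_, ?_, ?_, ?_, ?_⟩
  · exact fun a b h => h
  · exact fun a b h => h
  · exact fun u => ⟨0, @Subsingleton.elim PUnit.{u+1} _ _ _⟩
  · exact fun u => ⟨0, @Subsingleton.elim PUnit.{u+1} _ _ _⟩
  · show LinearMap.range (LinearMap.id (M := X.P)) = LinearMap.ker (0 : _ →ₗ[Λ] _)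
    simp
  · show LinearMap.range (LinearMap.id (M := X.Q)) = LinearMap.ker (0 : _ →ₗ[Λ] _)
    simp

/-- The key construction: a rigid pair of conflations splits. -/
lemma inAdd_of_fac_sub {M X : PObj Λ} (hM : Ext1Vanishes M M)
    (h1 : InFac M X) (h2 : InSub M X) : InAdd M X := by
  obtain ⟨M0, hM0, p, hp⟩ := h1
  obtain ⟨M1, hM1, i, hi⟩ := h2
  obtain ⟨s, t, hs, ht⟩ := inflation_retractions i hi
  obtain ⟨ρ, hρ⟩ := deflation_section p hp
  -- the "defect" of the chosen retractions
  set δ : M1.P →ₗ[Λ] X.Q := X.f.comp s - t.comp M1.f with hδ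
  have hδa : ∀ x : X.P, δ (i.a x) = 0 := by
    intro x
    have h1 := LinearMap.congr_fun hs x
    have h2 := LinearMap.congr_fun i.comm x
    simp only [LinearMap.comp_apply, LinearMap.id_apply] at h1 h2
    have h3 := LinearMap.congr_fun ht (X.f x)
    simp only [LinearMap.comp_apply, LinearMap.id_apply] at h3
    simp [hδ, LinearMap.sub_apply, LinearMap.comp_apply, h1, h2, h3]
  obtain ⟨A, B, hAB⟩ := htpy_of_inAdd hM hM1 hM0 (ρ.comp δ)
  have hAB' : ∀ y : M1.P, ρ (δ y) = M0.f (A y) + B (M1.f y) := by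
    intro y
    have := LinearMap.congr_fun hAB y
    simpa [LinearMap.comp_apply] using this
  have hρ' : ∀ q, p.b (ρ q) = q := by
    intro q
    have := LinearMap.congr_fun hρ q
    simpa using this
  -- the main pointwise identity `δ y = X.f (p.a (A y)) + p.b (B (M1.f y))`
  have key : ∀ y : M1.P, δ y = X.f (p.a (A y)) + p.b (B (M1.f y)) := by
    intro y
    have h4 := congrArg p.b (hAB' y)
    rw [hρ'] at h4
    have h5 := LinearMap.congr_fun p.comm (A y)
    simp only [LinearMap.comp_apply] at h5
    rw [map_add, ← h5] at h4
    exact h4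
  -- the retraction `r : M1 → X`
  have rcomm : X.f.comp (s - p.a.comp A) = (t + p.b.comp B).comp M1.f := by
    ext y
    have hk := key y
    simp only [hδ, LinearMap.sub_apply, LinearMap.comp_apply, LinearMap.add_apply] at hk ⊢
    rw [map_sub]
    rw [sub_eq_iff_eq_add] at hk ⊢
    rw [hk]
    abel
  -- the morphism `φ : X → M0`
  have φcomm : M0.f.comp (A.comp i.a) = (-(B.comp i.b)).comp X.f := by
    ext x
    have h0 := hAB' (i.a x)
    rw [hδa x, map_zero] at h0
    have h2 := LinearMap.congr_fun i.comm x
    simp only [LinearMap.comp_apply] at h2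
    rw [h2] at h0
    simp only [LinearMap.comp_apply, LinearMap.neg_apply]
    exact eq_neg_of_add_eq_zero_left h0.symm
  have idA : ∀ x, (s - p.a.comp A) (i.a x) + p.a ((A.comp i.a) x) = x := by
    intro x
    have h1 := LinearMap.congr_fun hs x
    simp only [LinearMap.comp_apply, LinearMap.id_apply] at h1
    simp only [LinearMap.sub_apply, LinearMap.comp_apply]
    rw [sub_add_cancel]
    exact h1
  have idB : ∀ q, (t + p.b.comp B) (i.b q) + p.b ((-(B.comp i.b)) q) = q := by
    intro q
    have h1 := LinearMap.congr_fun ht q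
    simp only [LinearMap.comp_apply, LinearMap.id_apply] at h1
    simp only [LinearMap.add_apply, LinearMap.comp_apply, LinearMap.neg_apply, map_neg]
    rw [add_assoc, add_neg_cancel, add_zero]
    exact h1
  -- `X` is a direct summand of `M1 ⊕ M0`
  refine inAdd_of_summand (inAdd_prod hM1 hM0)
    ⟨⟨LinearMap.prod i.a (A.comp i.a), LinearMap.prod i.b (-(B.comp i.b)), ?_⟩,
     ⟨(s - p.a.comp A).comp (LinearMap.fst Λ M1.P M0.P)
        + p.a.comp (LinearMap.snd Λ M1.P M0.P),
      (t + p.b.comp B).comp (LinearMap.fst Λ M1.Q M0.Q)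
        + p.b.comp (LinearMap.snd Λ M1.Q M0.Q), ?_⟩,
     PHom.ext' ?_ ?_⟩
  · -- commutation square for the section
    ext x
    have c1 := LinearMap.congr_fun i.comm x
    have c2 := LinearMap.congr_fun φcomm x
    simp only [LinearMap.comp_apply] at c1 c2
    simp only [LinearMap.comp_apply, LinearMap.prod_apply, Pi.prod, PObj.prod,
      LinearMap.prodMap_apply]
    exact Prod.ext c1 c2
  · -- commutation square for the retraction
    ext y
    have c1 := LinearMap.congr_fun rcomm y.1
    have c2 := LinearMap.congr_fun p.comm y.2
    simp only [LinearMap.comp_apply, LinearMap.sub_apply, LinearMap.add_apply] at c1 c2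
    rw [map_sub, sub_eq_iff_eq_add] at c1
    change X.f ((s - p.a.comp A) y.1 + p.a y.2) = (t + p.b.comp B) (M1.f y.1) + p.b (M0.f y.2)
    simp only [LinearMap.comp_apply, LinearMap.add_apply, LinearMap.fst_apply,
      LinearMap.snd_apply, LinearMap.sub_apply, PObj.prod, LinearMap.prodMap_apply,
      map_add, map_sub]
    rw [c1, c2]
    abel
  · -- retraction ∘ section = id on `P`-components
    ext x
    exact idA x
  · -- retraction ∘ section = id on `Q`-components
    ext q
    exact idB q


end Aux


/-- For a rigid object `M` of `𝒫(Λ)` one has `Fac M ∩ Sub M = add M`. -/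
theorem fac_inter_sub_eq_add (R : Type u) [CommRing R] [IsArtinianRing R]
    [Algebra R Λ] [Module.Finite R Λ]
    (M : PObj Λ) (hM : Ext1Vanishes M M) :
    ∀ X : PObj Λ, (InFac M X ∧ InSub M X) ↔ InAdd M X := by
  intro X
  constructor
  · rintro ⟨h1, h2⟩
    exact inAdd_of_fac_sub hM h1 h2
  · intro hX
    exact ⟨⟨X, hX, PHom.id X, id_isDeflation X⟩, ⟨X, hX, PHom.id X, id_isInflation X⟩⟩
end

section
/- Let Λ be an artin algebra and M a rigid object in 𝒫(Λ) (Ext^1_{𝒫}(M,M)=0). Then Cok M, the cokernel functor applied to add M, yields a τ-rigid Λ-module; i.e. Hom_Λ(Cok M, τ(Cok M)) = 0. -/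
/-!
Common setting: `Λ` is an artin algebra (over a commutative artinian ring `R`, added in the
theorem statements).  `PObj Λ` is the exact category `𝒫(Λ) = Mor(proj-Λ)` of morphisms between
finitely generated projective `Λ`-modules, with conflations the degreewise exact sequences.
-/

open Function

universe u

variable (Λ : Type u) [Ring Λ]

variable {Λ}

section Aux

variable {Λ : Type u} [Ring Λ]

/-- Rigidity of `M` gives the factorization property for arbitrary maps `σ : M.P → M.Q`. -/
lemma rigid_sigma (M : PObj Λ) (hM : Ext1Vanishes M M) (σ : M.P →ₗ[Λ] M.Q) :
    ∃ (u : M.P →ₗ[Λ] M.P) (v : M.Q →ₗ[Λ] M.Q), σ = v.comp M.f + M.f.comp u := by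
  haveI h1 := M.fgP; haveI h2 := M.projP; haveI h3 := M.fgQ; haveI h4 := M.projQ
  let E : PObj Λ :=
    { P := M.P × M.P, Q := M.Q × M.Q,
      fgP := inferInstance, projP := inferInstance,
      fgQ := inferInstance, projQ := inferInstance,
      f := LinearMap.prod
        ((M.f.comp (LinearMap.fst Λ M.P M.P)) + σ.comp (LinearMap.snd Λ M.P M.P))
        (M.f.comp (LinearMap.snd Λ M.P M.P)) }
  let i : PHom M E :=
    ⟨LinearMap.inl Λ M.P M.P, LinearMap.inl Λ M.Q M.Q, by
      ext x <;> simp [E, LinearMap.prod_apply]⟩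
  let p : PHom E M :=
    ⟨LinearMap.snd Λ M.P M.P, LinearMap.snd Λ M.Q M.Q, by
      ext x <;> simp [E, LinearMap.prod_apply]⟩
  have conf : IsConflation i p :=
    { inj_a := LinearMap.inl_injective
      inj_b := LinearMap.inl_injective
      surj_a := LinearMap.snd_surjective
      surj_b := LinearMap.snd_surjective
      exact_a := LinearMap.range_inl Λ M.P M.P
      exact_b := LinearMap.range_inl Λ M.Q M.Q }
  obtain ⟨s, hs⟩ := hM E i p conf
  have hsa : ∀ x, (s.a x).2 = x := fun x => LinearMap.congr_fun (congrArg PHom.a hs) x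
  refine ⟨-((LinearMap.fst Λ M.P M.P).comp s.a), (LinearMap.fst Λ M.Q M.Q).comp s.b, ?_⟩
  ext x
  have hcomm := LinearMap.congr_fun s.comm x
  have h1 : M.f (s.a x).1 + σ (s.a x).2 = (s.b (M.f x)).1 := congrArg Prod.fst hcomm
  rw [hsa x] at h1
  simp only [LinearMap.add_apply, LinearMap.comp_apply, LinearMap.fst_apply,
    LinearMap.neg_apply, map_neg]
  rw [← h1]; abel

/-- If `e` is a surjective endomorphism of a projective module whose kernel is contained in a
"small" submodule, then `e` is injective. -/
lemma inj_of_small {P : Type u} [AddCommGroup P] [Module Λ P]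
    (hp : Module.Projective Λ P) (e : P →ₗ[Λ] P) (hs : Function.Surjective e)
    {K : Submodule Λ P} (hk : LinearMap.ker e ≤ K)
    (small : ∀ K' : Submodule Λ P, K' ⊔ K = ⊤ → K' = ⊤) : Function.Injective e := by
  obtain ⟨t, ht⟩ := Module.projective_lifting_property e LinearMap.id hs
  have ht' : ∀ x, e (t x) = x := fun x => LinearMap.congr_fun ht x
  have hrange : LinearMap.range (t.comp e) = ⊤ := by
    apply small
    rw [eq_top_iff]
    intro x _
    apply Submodule.mem_sup.2
    refine ⟨t (e x), ⟨x, rfl⟩, x - t (e x), hk ?_, by abel⟩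
    simp [LinearMap.mem_ker, ht']
  have hker : ∀ x, e x = 0 → x = 0 := by
    intro x hx
    obtain ⟨y, hy⟩ : x ∈ LinearMap.range (t.comp e) := hrange ▸ Submodule.mem_top
    have : t (e x) = x := by
      rw [← hy]; simp only [LinearMap.comp_apply]; rw [ht']
    rw [← this, hx, map_zero]
  intro a b hab
  have : e (a - b) = 0 := by rw [map_sub, hab, sub_self]
  exact sub_eq_zero.1 (hker _ this)

end Aux


/-- If `M` is a rigid object of `𝒫(Λ)`, then `Cok M` is a `τ`-rigid
`Λ`-module. -/
theorem cok_of_rigid_is_tauRigid (R : Type u) [CommRing R] [IsArtinianRing R]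
    [Algebra R Λ] [Module.Finite R Λ]
    (M : PObj Λ) (hM : Ext1Vanishes M M) :
    IsTauRigid (Λ := Λ) (M.Q ⧸ LinearMap.range M.f) := by
  haveI hQfin := M.fgQ
  haveI hQproj := M.projQ
  haveI hPfin := M.fgP
  haveI hPproj := M.projP
  constructor
  · exact Module.Finite.of_surjective (LinearMap.range M.f).mkQ
      (Submodule.mkQ_surjective _)
  · intro P1 P0 _ _ _ _ f' g' hpres h
    haveI := hpres.finP1; haveI := hpres.finP0
    haveI := hpres.projP1; haveI := hpres.projP0
    have πsurj : Function.Surjective (LinearMap.range M.f).mkQ :=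
      Submodule.mkQ_surjective _
    have πf : ∀ x, (LinearMap.range M.f).mkQ (M.f x) = 0 := by
      intro x
      rw [Submodule.mkQ_apply, Submodule.Quotient.mk_eq_zero]
      exact ⟨x, rfl⟩
    -- comparison maps
    obtain ⟨β0, hβ0⟩ := Module.projective_lifting_property (LinearMap.range M.f).mkQ g' πsurj
    have hβ0' : ∀ x, (LinearMap.range M.f).mkQ (β0 x) = g' x := fun x =>
      LinearMap.congr_fun hβ0 x
    have hgf : ∀ x, g' (f' x) = 0 := by
      intro x
      have hx : f' x ∈ LinearMap.range f' := ⟨x, rfl⟩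
      rw [hpres.exact_seq] at hx
      exact hx
    have hmem1 : ∀ x, β0 (f' x) ∈ LinearMap.range M.f := by
      intro x
      have : (LinearMap.range M.f).mkQ (β0 (f' x)) = 0 := by rw [hβ0', hgf]
      rwa [Submodule.mkQ_apply, Submodule.Quotient.mk_eq_zero] at this
    obtain ⟨β1, hβ1⟩ := Module.projective_lifting_property M.f.rangeRestrict
      ((β0.comp f').codRestrict (LinearMap.range M.f) hmem1) M.f.surjective_rangeRestrict
    have hβ1' : ∀ x, M.f (β1 x) = β0 (f' x) := by
      intro x
      have h2 := congrArg (Submodule.subtype (LinearMap.range M.f)) (LinearMap.congr_fun hβ1 x)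
      simpa using h2
    obtain ⟨γ0, hγ0⟩ := Module.projective_lifting_property g' (LinearMap.range M.f).mkQ hpres.surj
    have hγ0' : ∀ x, g' (γ0 x) = (LinearMap.range M.f).mkQ x := fun x =>
      LinearMap.congr_fun hγ0 x
    have hmem2 : ∀ x, γ0 (M.f x) ∈ LinearMap.range f' := by
      intro x
      rw [hpres.exact_seq]
      show g' (γ0 (M.f x)) = 0
      rw [hγ0', πf]
    have f'rsurj : Function.Surjective f'.rangeRestrict := f'.surjective_rangeRestrict
    obtain ⟨γ1, hγ1⟩ := Module.projective_lifting_property f'.rangeRestrict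
      ((γ0.comp M.f).codRestrict (LinearMap.range f') hmem2) f'rsurj
    have hγ1' : ∀ x, f' (γ1 x) = γ0 (M.f x) := by
      intro x
      have h2 := congrArg (Submodule.subtype (LinearMap.range f')) (LinearMap.congr_fun hγ1 x)
      simpa using h2
    -- the endomorphisms e0, e1
    set e0 := γ0.comp β0 with he0
    set e1 := γ1.comp β1 with he1
    have hge0 : ∀ x, g' (e0 x) = g' x := by
      intro x; rw [he0]; simp only [LinearMap.comp_apply]; rw [hγ0', hβ0']
    have hfe1 : ∀ x, f' (e1 x) = e0 (f' x) := by
      intro x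
      rw [he1, he0]; simp only [LinearMap.comp_apply]
      rw [hγ1', hβ1']
    have e0surj : Function.Surjective e0 := by
      have : LinearMap.range e0 = ⊤ := by
        apply hpres.small0
        rw [eq_top_iff]
        intro x _
        apply Submodule.mem_sup.2
        refine ⟨e0 x, ⟨x, rfl⟩, x - e0 x, ?_, by abel⟩
        show g' (x - e0 x) = 0
        rw [map_sub, hge0, sub_self]
      exact LinearMap.range_eq_top.1 this
    have e0inj : Function.Injective e0 := by
      apply inj_of_small hpres.projP0 e0 e0surj (K := LinearMap.ker g')
      · intro x hx
        have hx0 : e0 x = 0 := hx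
        show g' x = 0
        rw [← hge0 x, hx0, map_zero]
      · exact hpres.small0
    have e1surj : Function.Surjective e1 := by
      have : LinearMap.range e1 = ⊤ := by
        apply hpres.small1
        rw [eq_top_iff]
        intro x _
        apply Submodule.mem_sup.2
        obtain ⟨y, hy⟩ := e0surj (f' x)
        have hyk : y ∈ LinearMap.range f' := by
          rw [hpres.exact_seq]
          show g' y = 0
          rw [← hge0 y, hy, hgf]
        obtain ⟨w, hw⟩ := hyk
        have hfw : f' (e1 w) = f' x := by rw [hfe1, hw, hy]
        refine ⟨e1 w, ⟨w, rfl⟩, x - e1 w, ?_, by abel⟩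
        show f' (x - e1 w) = 0
        rw [map_sub, hfw, sub_self]
      exact LinearMap.range_eq_top.1 this
    have e1inj : Function.Injective e1 := by
      apply inj_of_small hpres.projP1 e1 e1surj (K := LinearMap.ker f')
      · intro x hx
        have hx0 : e1 x = 0 := hx
        show f' x = 0
        apply e0inj
        rw [← hfe1, hx0, map_zero, map_zero]
      · exact hpres.small1
    -- lift h
    obtain ⟨σ, hσ⟩ := Module.projective_lifting_property (LinearMap.range M.f).mkQ
      (h.comp γ1) πsurj
    have hσ' : ∀ x, (LinearMap.range M.f).mkQ (σ x) = h (γ1 x) := fun x =>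
      LinearMap.congr_fun hσ x
    obtain ⟨u, v, huv⟩ := rigid_sigma M hM σ
    have key : ∀ x, h (γ1 x) = (LinearMap.range M.f).mkQ (v (M.f x)) := by
      intro x
      rw [← hσ', huv]
      simp only [LinearMap.add_apply, LinearMap.comp_apply, map_add]
      rw [πf, add_zero]
    have key2 : ∀ x, h (e1 x) = (LinearMap.range M.f).mkQ (v (β0 (f' x))) := by
      intro x
      rw [he1]; simp only [LinearMap.comp_apply]
      rw [key, hβ1']
    set E0 := LinearEquiv.ofBijective e0 ⟨e0inj, e0surj⟩ with hE0
    set E1 := LinearEquiv.ofBijective e1 ⟨e1inj, e1surj⟩ with hE1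
    refine ⟨((LinearMap.range M.f).mkQ.comp (v.comp β0)).comp (E0.symm : P0 →ₗ[Λ] P0), ?_⟩
    ext x
    simp only [LinearMap.comp_apply, LinearEquiv.coe_coe]
    have hx1 : e1 (E1.symm x) = x := E1.apply_symm_apply x
    have hx2 : f' (E1.symm x) = E0.symm (f' x) := by
      apply e0inj
      have h1 : e0 (f' (E1.symm x)) = f' x := by rw [← hfe1, hx1]
      have h2 : e0 (E0.symm (f' x)) = f' x := E0.apply_symm_apply (f' x)
      rw [h1, h2]
    calc h x = h (e1 (E1.symm x)) := by rw [hx1]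
      _ = (LinearMap.range M.f).mkQ (v (β0 (f' (E1.symm x)))) := key2 _
      _ = (LinearMap.range M.f).mkQ (v (β0 (E0.symm (f' x)))) := by rw [hx2]
end

section
/- Let Λ be an artin algebra, M a finitely generated Λ-module with minimal projective presentation P_1 →f→ P_0 → M → 0. If M is τ-rigid (Hom_Λ(M, τM) = 0), then the object (P_1 →f→ P_0) is rigid in 𝒫(Λ), i.e. Ext^1_{𝒫}((P_1→P_0),(P_1→P_0)) = 0. -/
/-!
Common setting: `Λ` is an artin algebra (over a commutative artinian ring `R`, added in the
theorem statements).  `PObj Λ` is the exact category `𝒫(Λ) = Mor(proj-Λ)` of morphisms between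
finitely generated projective `Λ`-modules, with conflations the degreewise exact sequences.
-/

open Function

universe u

variable (Λ : Type u) [Ring Λ]

variable {Λ}

/-- If `M` is a `τ`-rigid module with minimal projective presentation
`P₁ →f→ P₀ → M → 0`, then `(P₁ →f→ P₀)` is a rigid object of `𝒫(Λ)`. -/
theorem tauRigid_gives_rigid_object (R : Type u) [CommRing R] [IsArtinianRing R]
    [Algebra R Λ] [Module.Finite R Λ]
    (P1 P0 M : Type u) [AddCommGroup P1] [Module Λ P1] [AddCommGroup P0] [Module Λ P0]
    [AddCommGroup M] [Module Λ M]
    (f : P1 →ₗ[Λ] P0) (g : P0 →ₗ[Λ] M) (hmin : IsMinProjPres f g)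
    (htau : IsTauRigid (Λ := Λ) M) :
    Ext1Vanishes hmin.pobj hmin.pobj := by
  intro E i p hc
  haveI : Module.Projective Λ (IsMinProjPres.pobj hmin).P := hmin.projP1
  haveI : Module.Projective Λ (IsMinProjPres.pobj hmin).Q := hmin.projP0
  haveI : Module.Projective Λ P1 := hmin.projP1
  haveI : Module.Projective Λ P0 := hmin.projP0
  obtain ⟨sa, hsa⟩ : ∃ sa : P1 →ₗ[Λ] E.P, p.a.comp sa = LinearMap.id :=
    Module.projective_lifting_property p.a LinearMap.id hc.surj_a
  obtain ⟨sb, hsb⟩ : ∃ sb : P0 →ₗ[Λ] E.Q, p.b.comp sb = LinearMap.id :=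
    Module.projective_lifting_property p.b LinearMap.id hc.surj_b
  set d : P1 →ₗ[Λ] E.Q := E.f.comp sa - sb.comp f with hd
  have hdmem : ∀ x, d x ∈ LinearMap.range i.b := by
    intro x
    rw [hc.exact_b, LinearMap.mem_ker]
    have h1 := LinearMap.congr_fun p.comm (sa x)
    have h2 := LinearMap.congr_fun hsa x
    have h3 := LinearMap.congr_fun hsb (f x)
    simp only [LinearMap.comp_apply, LinearMap.id_apply] at h1 h2 h3
    simp only [hd, LinearMap.sub_apply, LinearMap.comp_apply, map_sub, ← h1, h2, h3]
    exact sub_self _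
  set e : P1 →ₗ[Λ] P0 :=
    ((LinearEquiv.ofInjective i.b hc.inj_b).symm.toLinearMap).comp
      (d.codRestrict (LinearMap.range i.b) hdmem) with he
  have hib : ∀ x, i.b (e x) = d x := by
    intro x
    exact congrArg Subtype.val
      ((LinearEquiv.ofInjective i.b hc.inj_b).apply_symm_apply ⟨d x, hdmem x⟩)
  obtain ⟨k, hk⟩ := htau.2 P1 P0 f g hmin (g.comp e)
  obtain ⟨k', hk'⟩ := Module.projective_lifting_property g k hmin.surj
  set w : P1 →ₗ[Λ] P0 := e - k'.comp f with hw
  have hwmem : ∀ x, w x ∈ LinearMap.range f := by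
    intro x
    rw [hmin.exact_seq, LinearMap.mem_ker]
    have h1 := LinearMap.congr_fun hk x
    have h2 := LinearMap.congr_fun hk' (f x)
    simp only [LinearMap.comp_apply] at h1 h2
    simp only [hw, LinearMap.sub_apply, LinearMap.comp_apply, map_sub, h1, h2]
    exact sub_self _
  obtain ⟨u, hu⟩ := Module.projective_lifting_property f.rangeRestrict
    (w.codRestrict (LinearMap.range f) hwmem) f.surjective_rangeRestrict
  have hfu : ∀ x, f (u x) = w x := by
    intro x
    have := congrArg Subtype.val (LinearMap.congr_fun hu x)
    simpa using this
  refine ⟨⟨sa - i.a.comp u, sb + i.b.comp k', ?_⟩, ?_⟩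
  · ext x
    have hicomm : E.f (i.a (u x)) = i.b (f (u x)) := by
      have := LinearMap.congr_fun i.comm (u x)
      exact this
    have hd' : i.b (e x) = E.f (sa x) - sb (f x) := by
      exact hib x
    have hw' : f (u x) = e x - k' (f x) := by exact hfu x
    show E.f (sa x - i.a (u x)) = sb (f x) + i.b (k' (f x))
    rw [map_sub, hicomm, hw']
    erw [map_sub, hd']
    abel
  · have hpa : ∀ y, p.a (i.a y) = 0 := by
      intro y
      have : i.a y ∈ LinearMap.ker p.a := hc.exact_a ▸ ⟨y, rfl⟩
      exact this
    have hpb : ∀ y, p.b (i.b y) = 0 := by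
      intro y
      have : i.b y ∈ LinearMap.ker p.b := hc.exact_b ▸ ⟨y, rfl⟩
      exact this
    have ha : p.a.comp (sa - i.a.comp u) = LinearMap.id := by
      ext x
      have := LinearMap.congr_fun hsa x
      simp only [LinearMap.comp_apply, LinearMap.sub_apply, map_sub, LinearMap.id_apply] at this ⊢
      rw [this]
      erw [hpa (u x)]
      rw [sub_zero]
    have hb : p.b.comp (sb + i.b.comp k') = LinearMap.id := by
      ext x
      have := LinearMap.congr_fun hsb x
      simp only [LinearMap.comp_apply, LinearMap.add_apply, map_add, LinearMap.id_apply] at this ⊢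
      rw [this]
      erw [hpb (k' x)]
      rw [add_zero]
    show PHom.mk _ _ _ = PHom.mk _ _ _
    simp only [PHom.mk.injEq]
    exact ⟨ha, hb⟩
end

section
/- Let Λ be an artin algebra and ℙ = (P^{-1} →d→ P^0) a 2-term complex of finitely generated projective Λ-modules. If ℙ is presilting, i.e. Hom_{K^b(proj-Λ)}(ℙ, ℙ[1]) = 0, then the object (P^{-1} →d→ P^0) of 𝒫(Λ) is rigid, i.e. Ext^1_{𝒫}((P^{-1}→P^0),(P^{-1}→P^0)) = 0. -/
/-!
Common setting: `Λ` is an artin algebra (over a commutative artinian ring `R`, added in the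
theorem statements).  `PObj Λ` is the exact category `𝒫(Λ) = Mor(proj-Λ)` of morphisms between
finitely generated projective `Λ`-modules, with conflations the degreewise exact sequences.
-/

open Function

universe u

variable (Λ : Type u) [Ring Λ]

variable {Λ}

/-- If the 2-term complex `ℙ = (X.P →X.f→ X.Q)` is presilting, i.e. every map
`g : X.P → X.Q` is null-homotopic (`g = α ∘ f + f ∘ β`), then `X` is a rigid object of
`𝒫(Λ)`. -/
theorem presilting_gives_rigid (R : Type u) [CommRing R] [IsArtinianRing R]
    [Algebra R Λ] [Module.Finite R Λ]
    (X : PObj Λ)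
    (hpresilt : ∀ g : X.P →ₗ[Λ] X.Q, ∃ (α : X.Q →ₗ[Λ] X.Q) (β : X.P →ₗ[Λ] X.P),
      g = α.comp X.f + X.f.comp β) :
    Ext1Vanishes X X := by
  intro E i p hconf
  haveI := X.projP
  haveI := X.projQ
  -- degreewise sections of p
  obtain ⟨sa, hsa⟩ := Module.projective_lifting_property p.a LinearMap.id hconf.surj_a
  obtain ⟨sb, hsb⟩ := Module.projective_lifting_property p.b LinearMap.id hconf.surj_b
  -- the defect g of (sa, sb) being a chain map
  set g : X.P →ₗ[Λ] E.Q := E.f.comp sa - sb.comp X.f with hg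
  have hmem : ∀ x, g x ∈ LinearMap.range i.b := by
    intro x
    rw [hconf.exact_b, LinearMap.mem_ker]
    have h1 := LinearMap.congr_fun p.comm (sa x)
    have h2 := LinearMap.congr_fun hsa x
    have h3 := LinearMap.congr_fun hsb (X.f x)
    simp only [LinearMap.comp_apply, LinearMap.id_apply] at h1 h2 h3
    simp only [hg, LinearMap.sub_apply, LinearMap.comp_apply, map_sub, ← h1, h2, h3, sub_self]
  -- factor g through i.b
  let eb := LinearEquiv.ofInjective i.b hconf.inj_b
  let h : X.P →ₗ[Λ] X.Q :=
    eb.symm.toLinearMap.comp (g.codRestrict (LinearMap.range i.b) hmem)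
  have hib : ∀ x, i.b (h x) = g x := by
    intro x
    have h1 := congrArg Subtype.val
      (eb.apply_symm_apply (g.codRestrict (LinearMap.range i.b) hmem x))
    rwa [LinearEquiv.ofInjective_apply] at h1
  obtain ⟨α, β, hαβ⟩ := hpresilt h
  -- adjusted section
  have hpi_a : ∀ x, p.a (i.a x) = 0 := by
    intro x
    have : i.a x ∈ LinearMap.ker p.a := by
      rw [← hconf.exact_a]; exact ⟨x, rfl⟩
    exact this
  have hpi_b : ∀ x, p.b (i.b x) = 0 := by
    intro x
    have : i.b x ∈ LinearMap.ker p.b := by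
      rw [← hconf.exact_b]; exact ⟨x, rfl⟩
    exact this
  refine ⟨⟨sa - i.a.comp β, sb + i.b.comp α, ?_⟩, ?_⟩
  · ext x
    have hic := LinearMap.congr_fun i.comm (β x)
    simp only [LinearMap.comp_apply] at hic
    have hhx := LinearMap.congr_fun hαβ x
    simp only [LinearMap.add_apply, LinearMap.comp_apply] at hhx
    have hgb := hib x
    rw [hhx] at hgb
    simp only [hg, LinearMap.sub_apply, LinearMap.add_apply, LinearMap.comp_apply,
      map_sub, map_add] at hgb ⊢
    rw [hic]
    have key : i.b (α (X.f x)) = E.f (sa x) - sb (X.f x) - i.b (X.f (β x)) := by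
      rw [← hgb]; abel
    rw [key]; abel
  · have ha : p.a.comp (sa - i.a.comp β) = LinearMap.id := by
      ext x
      have hx := LinearMap.congr_fun hsa x
      simp only [LinearMap.comp_apply, LinearMap.id_apply] at hx
      simp [LinearMap.comp_apply, hpi_a, hx]
    have hb : p.b.comp (sb + i.b.comp α) = LinearMap.id := by
      ext x
      have hx := LinearMap.congr_fun hsb x
      simp only [LinearMap.comp_apply, LinearMap.id_apply] at hx
      simp [LinearMap.comp_apply, hpi_b, hx]
    simp only [PHom.comp, PHom.id, PHom.mk.injEq]
    exact ⟨ha, hb⟩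
end

section
/- Let Λ be an artin algebra and T = (P →d→ Q) an object of 𝒫(Λ) with Ext^1_{𝒫}(T, T) = 0. Then the associated 2-term complex ℙ (with P in degree −1 and Q in degree 0) is presilting in K^b(proj-Λ): Hom_{K^b(proj-Λ)}(ℙ, ℙ[1]) = 0. -/
/-!
Common setting: `Λ` is an artin algebra (over a commutative artinian ring `R`, added in the
theorem statements).  `PObj Λ` is the exact category `𝒫(Λ) = Mor(proj-Λ)` of morphisms between
finitely generated projective `Λ`-modules, with conflations the degreewise exact sequences.
-/

open Function

universe u

variable (Λ : Type u) [Ring Λ]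

variable {Λ}

/-- If `T = (X.P →X.f→ X.Q)` is a rigid object of `𝒫(Λ)`, then the associated
2-term complex is presilting: every map `g : X.P → X.Q` is null-homotopic
(`g = α ∘ f + f ∘ β`). -/
theorem rigid_gives_presilting (R : Type u) [CommRing R] [IsArtinianRing R]
    [Algebra R Λ] [Module.Finite R Λ]
    (X : PObj Λ) (hrigid : Ext1Vanishes X X) :
    ∀ g : X.P →ₗ[Λ] X.Q, ∃ (α : X.Q →ₗ[Λ] X.Q) (β : X.P →ₗ[Λ] X.P),
      g = α.comp X.f + X.f.comp β := by
  intro g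
  set E : PObj Λ :=
    { P := X.P × X.P
      Q := X.Q × X.Q
      fgP := by haveI := X.fgP; infer_instance
      projP := by haveI := X.projP; infer_instance
      fgQ := by haveI := X.fgQ; infer_instance
      projQ := by haveI := X.projQ; infer_instance
      f := (X.f.comp (LinearMap.fst Λ X.P X.P) + g.comp (LinearMap.snd Λ X.P X.P)).prod
            (X.f.comp (LinearMap.snd Λ X.P X.P)) } with hE
  obtain ⟨s, hs⟩ :=
    hrigid E
      ⟨LinearMap.inl Λ X.P X.P, LinearMap.inl Λ X.Q X.Q, by ext x <;> simp [E]⟩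
      ⟨LinearMap.snd Λ X.P X.P, LinearMap.snd Λ X.Q X.Q, by ext x <;> simp [E]⟩
      (by
        constructor
        · intro x y h
          exact congrArg Prod.fst h
        · intro x y h
          exact congrArg Prod.fst h
        · intro x; exact ⟨(0, x), rfl⟩
        · intro x; exact ⟨(0, x), rfl⟩
        · ext ⟨a, b⟩
          constructor
          · rintro ⟨y, hy⟩; rw [LinearMap.mem_ker, ← hy]; rfl
          · intro h
            have hb : b = 0 := h
            exact ⟨a, by rw [hb]; rfl⟩
        · ext ⟨a, b⟩
          constructor
          · rintro ⟨y, hy⟩; rw [LinearMap.mem_ker, ← hy]; rfl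
          · intro h
            have hb : b = 0 := h
            exact ⟨a, by rw [hb]; rfl⟩)
  have hsa : ∀ x : X.P, (s.a x).2 = x := fun x =>
    congrArg (fun φ : PHom X X => φ.a x) hs
  have hsb : ∀ q : X.Q, (s.b q).2 = q := fun q =>
    congrArg (fun φ : PHom X X => φ.b q) hs
  refine ⟨(LinearMap.fst Λ X.Q X.Q).comp s.b,
    -((LinearMap.fst Λ X.P X.P).comp s.a), ?_⟩
  ext x
  have hc := LinearMap.congr_fun s.comm x
  have h1 : X.f ((s.a x).1) + g ((s.a x).2) = (s.b (X.f x)).1 := congrArg Prod.fst hc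
  rw [hsa x] at h1
  simp only [LinearMap.add_apply, LinearMap.comp_apply, LinearMap.neg_apply, map_neg,
    LinearMap.fst_apply]
  rw [← h1]
  abel
end
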